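/- Let G be a connected unicyclic graph with n ≥ 3 vertices (a connected graph with exactly one cycle), let D be an orientation of G, and let a ≥ 1 be a real number. Then R⁰_{a+1}(D) ≤ (1/2)·[(n−1)^{a+1} + n − 1 + 2^{a+1}]. -/

import Mathlib

/-- An orientation of a simple graph `G`: each edge `{u,v}` is replaced by exactly one
of the arcs `(u,v)` or `(v,u)`. -/
structure SimpleGraph.Orientation {V : Type*} (G : SimpleGraph V) where
  /-- the arc relation of the orientation -/
  arc : V → V → Prop
  adj_of_arc : ∀ u v, arc u v → G.Adj u v
  arc_total : ∀ u v, G.Adj u v → arc u v ∨ arc v u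
  arc_asymm : ∀ u v, arc u v → ¬ arc v u

namespace SimpleGraph.Orientation

variable {V : Type*} {G : SimpleGraph V} (D : G.Orientation)

/-- The out-degree of a vertex in the orientation. -/
noncomputable def outDeg (u : V) : ℕ := Set.ncard {v | D.arc u v}

/-- The in-degree of a vertex in the orientation. -/
noncomputable def inDeg (v : V) : ℕ := Set.ncard {u | D.arc u v}

/-- An orientation is sink-source if every vertex has out-degree 0 or in-degree 0. -/
def IsSinkSource : Prop := ∀ v : V, D.outDeg v = 0 ∨ D.inDeg v = 0

open scoped Classical in
/-- The zeroth-order general Randić index `R⁰_{a+1}(D)` of an orientation: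
`(1/2) ∑_{(u,v) arc} ((d⁺ u)^a + (d⁻ v)^a)`. -/
noncomputable def randic [Fintype V] (a : ℝ) : ℝ :=
  (1 / 2) * ∑ p ∈ Finset.univ.filter (fun p : V × V => D.arc p.1 p.2),
    ((D.outDeg p.1 : ℝ) ^ a + (D.inDeg p.2 : ℝ) ^ a)

end SimpleGraph.Orientation

/-!
Counting every arc once at its tail and once at its head gives
`R⁰_{a+1}(D) = ½ ∑_v (d⁺(v)^(a+1) + d⁻(v)^(a+1))`. A connected graph with as many edges as
vertices either has a leaf or is a cycle, and we induct on `n`. Reversing `D` if necessary, a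
leaf `w` is a source whose only arc ends at `u`; deleting `w` removes the term `1` and lowers
`d⁻(u) ≤ n - 1` by one, which by convexity of `x ↦ x^(a+1)` changes the sum by at most
`(n-1)^(a+1) - (n-2)^(a+1)`: exactly the growth of the bound from `n - 1` to `n`.
On a cycle every vertex contributes at most `2^(a+1)`, and `n · 2^(a+1)` is within the bound
for `n ≥ 4` by the midpoint convexity inequality `2^(a+1) ≤ 3^a + 1`; on a triangle the odd
number of arcs forces a vertex with `d⁺ = d⁻ = 1`, which contributes only `2`.
-/

open Finset Real

theorem ConvexOn.map_add_sub_map_le {s : Set ℝ} {f : ℝ → ℝ} (hf : ConvexOn ℝ s f) {x y h : ℝ}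
    (hx : x ∈ s) (hyh : y + h ∈ s) (hxy : x ≤ y) (hh : 0 < h) :
    f (x + h) - f x ≤ f (y + h) - f y := by
  have hxh : x + h ∈ s := hf.1.ordConnected.out hx hyh ⟨by linarith, by linarith⟩
  have hy : y ∈ s := hf.1.ordConnected.out hx hyh ⟨hxy, by linarith⟩
  have h₁ := hf.secant_mono hx hxh hyh (by linarith) (by linarith) (by linarith)
  have h₂ := hf.secant_mono hyh hx hy (by linarith) (by linarith) hxy
  rw [← neg_div_neg_eq, ← neg_div_neg_eq (f y - _), neg_sub, neg_sub, neg_sub, neg_sub] at h₂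
  rw [add_sub_cancel_left] at h₁ h₂
  exact (div_le_div_iff_of_pos_right hh).1 (h₁.trans h₂)

theorem rpow_sub_rpow_sub_one_le {p x y : ℝ} (hp : 1 ≤ p) (hx : 1 ≤ x) (hxy : x ≤ y) :
    x ^ p - (x - 1) ^ p ≤ y ^ p - (y - 1) ^ p := by
  simpa using (convexOn_rpow hp).map_add_sub_map_le (x := x - 1) (y := y - 1)
    (by simp; linarith) (by simp; linarith) (by linarith) one_pos

theorem two_rpow_add_one_le {a : ℝ} (ha : 1 ≤ a) : (2 : ℝ) ^ (a + 1) ≤ 3 ^ a + 1 := by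
  have h := (convexOn_rpow ha).2 (Set.mem_Ici.2 zero_le_one) (Set.mem_Ici.2 zero_le_three)
    (by norm_num : (0 : ℝ) ≤ 1 / 2) (by norm_num : (0 : ℝ) ≤ 1 / 2) (by norm_num)
  norm_num at h
  rw [rpow_add_one two_ne_zero]
  linarith

theorem mul_two_rpow_le {a x : ℝ} (ha : 1 ≤ a) (hx : 3 ≤ x) :
    x * 2 ^ (a + 1) ≤ x ^ (a + 1) + x := by
  have h3x : (3 : ℝ) ^ a ≤ x ^ a := rpow_le_rpow (by norm_num) hx (by linarith)
  calc x * 2 ^ (a + 1) ≤ x * (x ^ a + 1) :=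
        mul_le_mul_of_nonneg_left ((two_rpow_add_one_le ha).trans (by linarith)) (by linarith)
    _ = x ^ (a + 1) + x := by rw [rpow_add_one (by linarith)]; ring

theorem Fintype.sum_eq_add_sum_compl_singleton {V M : Type*} [Fintype V] [DecidableEq V]
    [AddCommMonoid M] (f : V → M) (w : V) :
    ∑ v, f v = f w + ∑ v : ({w}ᶜ : Set V), f v :=
  Fintype.sum_eq_add_sum_subtype_ne f w

theorem SimpleGraph.Connected.isRegularOfDegree_two {V : Type*} [Fintype V] {G : SimpleGraph V}
    [DecidableRel G.Adj] (hG : G.Connected) (hE : #G.edgeFinset = Fintype.card V)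
    (h1 : ∀ v, G.degree v ≠ 1) : G.IsRegularOfDegree 2 := by
  have hsum : ∑ v, G.degree v = ∑ _v : V, 2 := by
    simp [G.sum_degrees_eq_twice_card_edges, hE, mul_comm]
  have : Nontrivial V := by
    rw [← Fintype.one_lt_card_iff_nontrivial]
    by_contra! h
    have hpos := @Fintype.card_pos _ _ hG.nonempty
    have h0 (v : V) : G.degree v = 0 := by have := G.degree_lt_card_verts v; omega
    simp only [h0, sum_const_zero, sum_const, card_univ, smul_eq_mul] at hsum
    omega
  have h2 (v : V) : 2 ≤ G.degree v := by
    have := hG.preconnected.degree_pos_of_nontrivial v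
    have := h1 v
    omega
  exact fun v => ((sum_eq_sum_iff_of_le fun v _ => h2 v).1 hsum.symm v (mem_univ v)).symm

namespace SimpleGraph.Orientation

variable {V : Type*} {G : SimpleGraph V} (D : G.Orientation) {w u : V}

def reverse : G.Orientation where
  arc u v := D.arc v u
  adj_of_arc u v h := (D.adj_of_arc v u h).symm
  arc_total u v h := D.arc_total v u h.symm
  arc_asymm u v := D.arc_asymm v u

@[simp] lemma outDeg_reverse (v : V) : D.reverse.outDeg v = D.inDeg v := rfl

@[simp] lemma inDeg_reverse (v : V) : D.reverse.inDeg v = D.outDeg v := rfl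

def induce (s : Set V) : (G.induce s).Orientation where
  arc u v := D.arc u v
  adj_of_arc u v := D.adj_of_arc u v
  arc_total u v := D.arc_total u v
  arc_asymm u v := D.arc_asymm u v

lemma outDeg_add_inDeg (v : V) [Fintype (G.neighborSet v)] :
    D.outDeg v + D.inDeg v = G.degree v := by
  have hfin := (G.neighborSet v).toFinite
  rw [outDeg, inDeg, ← Set.ncard_union_eq (s := {u | D.arc v u}) (t := {u | D.arc u v})
    (Set.disjoint_left.2 fun u => D.arc_asymm v u)
    (hfin.subset (D.adj_of_arc v)) (hfin.subset fun u h => (D.adj_of_arc u v h).symm),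
    ← card_neighborSet_eq_degree, ← Nat.card_eq_fintype_card, Nat.card_coe_set_eq]
  congr 1
  ext u
  exact ⟨fun h => h.elim (D.adj_of_arc v u) (fun h => (D.adj_of_arc u v h).symm),
    D.arc_total v u⟩

lemma inDeg_lt_card [Fintype V] (v : V) : D.inDeg v < Fintype.card V := by
  classical
  have := D.outDeg_add_inDeg v
  have := G.degree_lt_card_verts v
  omega

lemma outDeg_rpow_add_inDeg_rpow_le {p : ℝ} (hp : 1 ≤ p) (v : V) [Fintype (G.neighborSet v)] :
    (D.outDeg v : ℝ) ^ p + (D.inDeg v : ℝ) ^ p ≤ (G.degree v : ℝ) ^ p := by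
  rw [← D.outDeg_add_inDeg, Nat.cast_add]
  exact add_rpow_le_rpow_add (Nat.cast_nonneg _) (Nat.cast_nonneg _) hp

section DeleteVertex

variable (v : ({w}ᶜ : Set V))

lemma outDeg_induce_compl_singleton :
    (D.induce {w}ᶜ).outDeg v = ({x | D.arc v x} \ {w}).ncard := by
  rw [outDeg, ← Set.ncard_image_of_injective _ Subtype.val_injective]
  congr 1
  ext x
  simp [induce, and_comm]

lemma inDeg_induce_compl_singleton :
    (D.induce {w}ᶜ).inDeg v = ({x | D.arc x v} \ {w}).ncard :=
  D.reverse.outDeg_induce_compl_singleton v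

lemma outDeg_induce_compl_singleton_of_not_arc (h : ¬ D.arc v w) :
    (D.induce {w}ᶜ).outDeg v = D.outDeg v := by
  rw [outDeg_induce_compl_singleton, Set.sdiff_singleton_eq_self (s := {x | D.arc v x}) h, outDeg]

lemma inDeg_induce_compl_singleton_of_not_arc (h : ¬ D.arc w v) :
    (D.induce {w}ᶜ).inDeg v = D.inDeg v := by
  rw [inDeg_induce_compl_singleton, Set.sdiff_singleton_eq_self (s := {x | D.arc x v}) h, inDeg]

lemma inDeg_induce_compl_singleton_add_one [Finite V] (h : D.arc w v) :
    (D.induce {w}ᶜ).inDeg v + 1 = D.inDeg v := by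
  rw [inDeg_induce_compl_singleton,
    Set.ncard_sdiff_singleton_add_one (s := {x | D.arc x v}) h, inDeg]

end DeleteVertex

lemma not_arc_of_forall_adj_eq (hwu : D.arc w u) (hu : ∀ v, G.Adj w v → v = u) (v : V) :
    ¬ D.arc v w := by
  intro hvw
  obtain rfl := hu v (D.adj_of_arc v w hvw).symm
  exact D.arc_asymm w v hwu hvw

lemma outDeg_eq_one_of_forall_adj_eq (hwu : D.arc w u) (hu : ∀ v, G.Adj w v → v = u) :
    D.outDeg w = 1 := by
  rw [outDeg, Set.ncard_eq_one]
  exact ⟨u, Set.ext fun v => ⟨fun h => hu v (D.adj_of_arc w v h), fun h => h ▸ hwu⟩⟩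

lemma inDeg_eq_zero_of_forall_adj_eq (hwu : D.arc w u) (hu : ∀ v, G.Adj w v → v = u) :
    D.inDeg w = 0 := by
  rw [inDeg, Set.eq_empty_of_forall_notMem (s := {v | D.arc v w})
    (D.not_arc_of_forall_adj_eq hwu hu), Set.ncard_empty]

section Fintype

variable [Fintype V]

open scoped Classical in
lemma sum_filter_arc_fst {M : Type*} [AddCommMonoid M] (g : V → M) :
    ∑ p ∈ univ.filter (fun p : V × V => D.arc p.1 p.2), g p.1 = ∑ u, D.outDeg u • g u := by
  rw [sum_filter, ← univ_product_univ, sum_product]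
  refine sum_congr rfl fun u _ => ?_
  dsimp only
  rw [← sum_filter, sum_const, outDeg, Set.ncard_eq_toFinset_card', Set.toFinset_ofPred]

open scoped Classical in
lemma sum_filter_arc_snd {M : Type*} [AddCommMonoid M] (g : V → M) :
    ∑ p ∈ univ.filter (fun p : V × V => D.arc p.1 p.2), g p.2 = ∑ v, D.inDeg v • g v := by
  rw [sum_filter, ← univ_product_univ, sum_product, sum_comm]
  refine sum_congr rfl fun v _ => ?_
  dsimp only
  rw [← sum_filter, sum_const, inDeg, Set.ncard_eq_toFinset_card', Set.toFinset_ofPred]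

lemma sum_outDeg_eq_sum_inDeg : ∑ v, D.outDeg v = ∑ v, D.inDeg v := by
  classical
  simpa only [smul_eq_mul, mul_one] using (D.sum_filter_arc_fst fun _ => (1 : ℕ)).symm.trans
    (D.sum_filter_arc_snd fun _ => (1 : ℕ))

lemma sum_outDeg_eq_ncard_edgeSet : ∑ v, D.outDeg v = G.edgeSet.ncard := by
  classical
  have h := G.sum_degrees_eq_twice_card_edges
  simp only [← D.outDeg_add_inDeg, sum_add_distrib, ← D.sum_outDeg_eq_sum_inDeg] at h
  rw [← Set.ncard_coe_finset, coe_edgeFinset] at h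
  omega

noncomputable def degPowSum (p : ℝ) : ℝ := ∑ v, ((D.outDeg v : ℝ) ^ p + (D.inDeg v : ℝ) ^ p)

lemma degPowSum_reverse (p : ℝ) : D.reverse.degPowSum p = D.degPowSum p := by
  simp only [degPowSum, outDeg_reverse, inDeg_reverse, add_comm]

lemma randic_eq_half_degPowSum {a : ℝ} (ha : a + 1 ≠ 0) :
    D.randic a = 1 / 2 * D.degPowSum (a + 1) := by
  have h (m : ℕ) : m • (m : ℝ) ^ a = (m : ℝ) ^ (a + 1) := by
    rw [nsmul_eq_mul, rpow_add_one' m.cast_nonneg ha, mul_comm]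
  rw [randic, sum_add_distrib, D.sum_filter_arc_fst fun u => (D.outDeg u : ℝ) ^ a,
    D.sum_filter_arc_snd fun v => (D.inDeg v : ℝ) ^ a, ← sum_add_distrib]
  simp only [h, degPowSum]

section DeleteLeaf

variable [DecidableEq V]

lemma sum_outDeg_induce_compl_singleton_add_one (hwu : D.arc w u)
    (hu : ∀ v, G.Adj w v → v = u) :
    ∑ v, (D.induce {w}ᶜ).outDeg v + 1 = ∑ v, D.outDeg v := by
  rw [Fintype.sum_eq_add_sum_compl_singleton _ w, D.outDeg_eq_one_of_forall_adj_eq hwu hu,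
    add_comm]
  congr 1
  exact Fintype.sum_congr _ _ fun v =>
    D.outDeg_induce_compl_singleton_of_not_arc v (D.not_arc_of_forall_adj_eq hwu hu v)

lemma degPowSum_eq_induce_compl_singleton (hwu : D.arc w u) (hu : ∀ v, G.Adj w v → v = u)
    {p : ℝ} (hp : p ≠ 0) :
    D.degPowSum p = (D.induce {w}ᶜ).degPowSum p + 1 +
      ((D.inDeg u : ℝ) ^ p - ((D.inDeg u : ℝ) - 1) ^ p) := by
  let u' : ({w}ᶜ : Set V) := ⟨u, (D.adj_of_arc w u hwu).ne.symm⟩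
  have hterm (v : ({w}ᶜ : Set V)) : (D.outDeg v : ℝ) ^ p + (D.inDeg v : ℝ) ^ p =
      ((D.induce {w}ᶜ).outDeg v : ℝ) ^ p + ((D.induce {w}ᶜ).inDeg v : ℝ) ^ p +
        if v = u' then (D.inDeg u : ℝ) ^ p - ((D.inDeg u : ℝ) - 1) ^ p else 0 := by
    rw [D.outDeg_induce_compl_singleton_of_not_arc v (D.not_arc_of_forall_adj_eq hwu hu v)]
    split_ifs with hv
    · subst hv
      rw [← D.inDeg_induce_compl_singleton_add_one u' hwu, Nat.cast_add_one,
        add_sub_cancel_right]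
      ring
    · have hwv : ¬ D.arc w v := fun h => hv (Subtype.ext (hu v (D.adj_of_arc w v h)))
      rw [D.inDeg_induce_compl_singleton_of_not_arc v hwv, add_zero]
  have hsum : ∑ v : ({w}ᶜ : Set V), ((D.outDeg v : ℝ) ^ p + (D.inDeg v : ℝ) ^ p) =
      (D.induce {w}ᶜ).degPowSum p + ((D.inDeg u : ℝ) ^ p - ((D.inDeg u : ℝ) - 1) ^ p) := by
    rw [Fintype.sum_congr _ _ hterm, sum_add_distrib, Fintype.sum_ite_eq']
    rfl
  rw [degPowSum, Fintype.sum_eq_add_sum_compl_singleton _ w, hsum,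
    D.outDeg_eq_one_of_forall_adj_eq hwu hu, D.inDeg_eq_zero_of_forall_adj_eq hwu hu,
    Nat.cast_one, Nat.cast_zero, one_rpow, zero_rpow hp]
  ring

variable [DecidableRel G.Adj]

lemma degPowSum_le_of_degree_eq_one {a : ℝ} (ha : 1 ≤ a) {m : ℕ}
    (hV : Fintype.card V = m + 1) (hD : ∑ v, D.outDeg v = m + 1) (hw : G.degree w = 1)
    (ih : ∀ E : (G.induce {w}ᶜ).Orientation, ∑ v, E.outDeg v = m →
      E.degPowSum (a + 1) ≤ ((m : ℝ) - 1) ^ (a + 1) + 2 ^ (a + 1) + ((m : ℝ) - 1)) :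
    D.degPowSum (a + 1) ≤ (m : ℝ) ^ (a + 1) + 2 ^ (a + 1) + m := by
  obtain ⟨u, hwu, hu⟩ := degree_eq_one_iff_existsUnique_adj.1 hw
  obtain ⟨E, hE, hEsum, hEwu⟩ : ∃ E : G.Orientation,
      E.degPowSum (a + 1) = D.degPowSum (a + 1) ∧ ∑ v, E.outDeg v = m + 1 ∧ E.arc w u := by
    rcases D.arc_total w u hwu with h | h
    · exact ⟨D, rfl, hD, h⟩
    · exact ⟨D.reverse, D.degPowSum_reverse _, by simpa [← D.sum_outDeg_eq_sum_inDeg] using hD, h⟩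
  have hIH := ih (E.induce {w}ᶜ) (by
    have := E.sum_outDeg_induce_compl_singleton_add_one hEwu hu
    omega)
  have hpos : 0 < E.inDeg u := (Set.ncard_pos (Set.toFinite _)).2 ⟨w, hEwu⟩
  have hle : E.inDeg u ≤ m := by have := E.inDeg_lt_card u; omega
  have hinc := rpow_sub_rpow_sub_one_le (p := a + 1) (by linarith)
    (Nat.one_le_cast.2 hpos) (Nat.cast_le.2 hle)
  rw [← hE, E.degPowSum_eq_induce_compl_singleton hEwu hu (by linarith)]
  linarith

end DeleteLeaf

section Cycle

variable [DecidableRel G.Adj]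

lemma exists_outDeg_eq_one_of_odd (hreg : G.IsRegularOfDegree 2)
    (hD : Odd (∑ v, D.outDeg v)) : ∃ v, D.outDeg v = 1 := by
  by_contra! h
  refine Nat.not_even_iff_odd.2 hD (even_sum _ fun v _ => ?_)
  have := D.outDeg_add_inDeg v
  rw [hreg v] at this
  obtain h0 | h2 : D.outDeg v = 0 ∨ D.outDeg v = 2 := by have := h v; omega
  · simp [h0]
  · simp [h2]

lemma degPowSum_le_of_isRegularOfDegree_two [Nonempty V] {a : ℝ} (ha : 1 ≤ a) {n : ℕ}
    (hreg : G.IsRegularOfDegree 2) (hV : Fintype.card V = n) (hD : ∑ v, D.outDeg v = n) :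
    D.degPowSum (a + 1) ≤ ((n : ℝ) - 1) ^ (a + 1) + 2 ^ (a + 1) + ((n : ℝ) - 1) := by
  classical
  have hterm (v : V) : (D.outDeg v : ℝ) ^ (a + 1) + (D.inDeg v : ℝ) ^ (a + 1) ≤ 2 ^ (a + 1) := by
    simpa [hreg v] using D.outDeg_rpow_add_inDeg_rpow_le (by linarith) v
  have hn : 3 ≤ n := by
    have := G.degree_lt_card_verts (Classical.arbitrary V)
    rw [hreg] at this
    omega
  obtain rfl | hn : n = 3 ∨ 4 ≤ n := by omega
  · obtain ⟨v, hv⟩ := D.exists_outDeg_eq_one_of_odd hreg (by rw [hD]; decide)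
    have hin : D.inDeg v = 1 := by have := D.outDeg_add_inDeg v; rw [hreg v] at this; omega
    have hrest := sum_le_card_nsmul (univ.erase v) _ _ fun u _ => hterm u
    rw [card_erase_of_mem (mem_univ v), card_univ, hV, nsmul_eq_mul] at hrest
    rw [degPowSum, ← add_sum_erase _ _ (mem_univ v), hv, hin]
    norm_num at hrest ⊢
    linarith
  · have hsum := sum_le_card_nsmul univ _ _ fun u _ => hterm u
    rw [card_univ, hV, nsmul_eq_mul] at hsum
    have := mul_two_rpow_le ha (x := (n : ℝ) - 1) (by
      have : (4 : ℝ) ≤ n := by exact_mod_cast hn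
      linarith)
    rw [degPowSum]
    linarith

end Cycle

theorem degPowSum_le_of_connected {a : ℝ} (ha : 1 ≤ a) (n : ℕ) (hV : Fintype.card V = n)
    (hG : G.Connected) (hD : ∑ v, D.outDeg v = n) :
    D.degPowSum (a + 1) ≤ ((n : ℝ) - 1) ^ (a + 1) + 2 ^ (a + 1) + ((n : ℝ) - 1) := by
  induction n generalizing V with
  | zero => exact absurd hV (@Fintype.card_ne_zero _ _ hG.nonempty)
  | succ m ih =>
    classical
    by_cases hleaf : ∃ w, G.degree w = 1
    · obtain ⟨w, hw⟩ := hleaf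
      push_cast
      rw [add_sub_cancel_right]
      refine D.degPowSum_le_of_degree_eq_one ha hV hD hw fun E hE =>
        ih E ?_ (hG.induce_compl_singleton_of_degree_eq_one hw) hE
      rw [Fintype.card_compl_set, Set.card_singleton, hV, add_tsub_cancel_right]
    · have := hG.nonempty
      refine D.degPowSum_le_of_isRegularOfDegree_two ha
        (hG.isRegularOfDegree_two ?_ (not_exists.1 hleaf)) hV hD
      rw [← Set.ncard_coe_finset, coe_edgeFinset, ← D.sum_outDeg_eq_ncard_edgeSet, hD, hV]

end Fintype

end SimpleGraph.Orientation

theorem oriented_unicyclic_randic_le_general {V : Type*} [Fintype V] (G : SimpleGraph V) (n : ℕ)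
    (hn : Fintype.card V = n)
    (hconn : G.Connected) (huni : G.edgeSet.ncard = n)
    (D : G.Orientation) (a : ℝ) (ha : 1 ≤ a) :
    D.randic a ≤ (1 / 2) * (((n : ℝ) - 1) ^ (a + 1) + (n : ℝ) - 1 + (2 : ℝ) ^ (a + 1)) := by
  have hbound := D.degPowSum_le_of_connected ha n hn hconn
    (D.sum_outDeg_eq_ncard_edgeSet.trans huni)
  rw [D.randic_eq_half_degPowSum (by linarith)]
  linarith

/-- for a connected unicyclic graph on `n ≥ 3` vertices (connected with
exactly one cycle, i.e. with exactly `n` edges), every orientation `D` satisfies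
`R⁰_{a+1}(D) ≤ (1/2)((n-1)^(a+1) + n - 1 + 2^(a+1))` for all real `a ≥ 1`. -/
theorem oriented_unicyclic_randic_le {V : Type*} [Fintype V] (G : SimpleGraph V) (n : ℕ)
    (hn : Fintype.card V = n) (hn3 : 3 ≤ n)
    (hconn : G.Connected) (huni : G.edgeSet.ncard = n)
    (D : G.Orientation) (a : ℝ) (ha : 1 ≤ a) :
    D.randic a ≤ (1 / 2) * (((n : ℝ) - 1) ^ (a + 1) + (n : ℝ) - 1 + (2 : ℝ) ^ (a + 1)) :=
  oriented_unicyclic_randic_le_general G n hn hconn huni D a ha
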